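/- arXiv:2512.01483 — 3 statements merged into one kernel-verified Lean document; each statement's English description precedes it below -/
import Mathlib

section
/- Let ε₁, ε₂ ∈ [0,1), and set A₁ = (1+ε₁)/(1−ε₁ε₂) and A₂ = (1+ε₂)/(1−ε₁ε₂). For every C > 0 there exists a constant M > 0, depending only on C, ε₁ and ε₂, with the following property: for every T > 0, every κ > 0, and every pair of continuous functions h, v : [0,T] → [0,∞) satisfying, for all t ∈ [0,T], h(t) ≤ C(κ + A₁ ∫₀ᵗ v(s)^{ε₁} ds) and v(t) ≤ C(κ + A₂ ∫₀ᵗ h(s)^{ε₂} ds), one has h(t) ≤ M (1 + κ + t)^{A₁} and v(t) ≤ M (1 + κ + t)^{A₂} for all t ∈ [0,T]. -/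
open Set MeasureTheory intervalIntegral

/-- Key step: one-sided strict bound propagation. -/
lemma key_step (ε a b C M κ T t₀ : ℝ) (hε : 0 ≤ ε) (hb : 0 ≤ b) (ha : a = ε * b + 1)
    (hC : 0 < C) (hM : 1 ≤ M) (hCM : C * (1 + M ^ ε) < M) (hκ : 0 < κ)
    (f g : ℝ → ℝ) (hg : ContinuousOn g (Icc 0 T)) (hgnn : ∀ s ∈ Icc 0 T, 0 ≤ g s)
    (ht₀ : t₀ ∈ Icc (0:ℝ) T)
    (hineq : f t₀ ≤ C * (κ + a * ∫ s in (0:ℝ)..t₀, (g s) ^ ε))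
    (hbdd : ∀ s ∈ Ico (0:ℝ) t₀, g s ≤ M * (1 + κ + s) ^ b) :
    f t₀ < M * (1 + κ + t₀) ^ a := by
  obtain ⟨ht₀0, ht₀T⟩ := ht₀
  have hM0 : (0:ℝ) < M := lt_of_lt_of_le one_pos hM
  have hc1 : (1:ℝ) ≤ 1 + κ := by linarith
  have hbase : (1:ℝ) ≤ 1 + κ + t₀ := by linarith
  have hbase0 : (0:ℝ) < 1 + κ + t₀ := by linarith
  have ha1 : (1:ℝ) ≤ a := by nlinarith
  have ha0 : (0:ℝ) < a := by linarith
  have huicc : uIcc (0:ℝ) t₀ = Icc 0 t₀ := uIcc_of_le ht₀0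
  have hsub : Icc (0:ℝ) t₀ ⊆ Icc 0 T := Icc_subset_Icc le_rfl ht₀T
  -- integrability of (g s)^ε
  have hgε : ContinuousOn (fun s => (g s) ^ ε) (Icc 0 t₀) :=
    (hg.mono hsub).rpow_const (fun x _ => Or.inr hε)
  have hint1 : IntervalIntegrable (fun s => (g s) ^ ε) volume 0 t₀ :=
    (hgε.mono (le_of_eq huicc)).intervalIntegrable
  -- the comparison function
  set φ : ℝ → ℝ := fun s => M ^ ε * (1 + κ + s) ^ (ε * b) with hφdef
  have hφc : ContinuousOn φ (Icc 0 t₀) := by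
    apply ContinuousOn.mul continuousOn_const
    exact ((continuous_const.add continuous_id').continuousOn).rpow_const
      (fun x _ => Or.inr (mul_nonneg hε hb))
  have hint2 : IntervalIntegrable φ volume 0 t₀ :=
    (hφc.mono (le_of_eq huicc)).intervalIntegrable
  -- a.e. bound on Icc 0 t₀
  have hane : ∀ᵐ x : ℝ, x ≠ t₀ := by
    rw [MeasureTheory.ae_iff]
    simpa using Real.volume_singleton (x := t₀)
  have hle : (fun s => (g s) ^ ε) ≤ᵐ[volume.restrict (Icc 0 t₀)] φ := by
    rw [Filter.EventuallyLE, MeasureTheory.ae_restrict_iff' measurableSet_Icc]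
    filter_upwards [hane] with x hx hxI
    have hxIco : x ∈ Ico (0:ℝ) t₀ := ⟨hxI.1, lt_of_le_of_ne hxI.2 hx⟩
    have hx0 : (0:ℝ) ≤ g x := hgnn x (hsub hxI)
    have hxb : (0:ℝ) < 1 + κ + x := by have := hxI.1; linarith
    calc (g x) ^ ε ≤ (M * (1 + κ + x) ^ b) ^ ε :=
          Real.rpow_le_rpow hx0 (hbdd x hxIco) hε
      _ = M ^ ε * (1 + κ + x) ^ (b * ε) := by
          rw [Real.mul_rpow hM0.le (Real.rpow_nonneg hxb.le b),
            ← Real.rpow_mul hxb.le]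
      _ = φ x := by rw [hφdef]; ring_nf
  have hmono : (∫ s in (0:ℝ)..t₀, (g s) ^ ε) ≤ ∫ s in (0:ℝ)..t₀, φ s :=
    intervalIntegral.integral_mono_ae_restrict ht₀0 hint1 hint2 hle
  -- compute the integral of φ
  have hcalc : (∫ s in (0:ℝ)..t₀, (1 + κ + s) ^ (ε * b))
      = ((1 + κ + t₀) ^ a - (1 + κ) ^ a) / a := by
    have h1 : (∫ s in (0:ℝ)..t₀, (1 + κ + s) ^ (ε * b))
        = ∫ x in (1+κ)..(1+κ+t₀), x ^ (ε * b) := by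
      simpa using intervalIntegral.integral_comp_add_left (a := (0:ℝ)) (b := t₀)
        (fun x => x ^ (ε * b)) (1 + κ)
    rw [h1, integral_rpow (Or.inl (by linarith : (-1:ℝ) < ε * b)), ← ha]
  have hφint : (∫ s in (0:ℝ)..t₀, φ s) = M ^ ε * (((1 + κ + t₀) ^ a - (1 + κ) ^ a) / a) := by
    rw [hφdef]
    rw [intervalIntegral.integral_const_mul, hcalc]
  have hpow_pos : (0:ℝ) < (1 + κ + t₀) ^ a := Real.rpow_pos_of_pos hbase0 a
  have hc_pow : (0:ℝ) < (1 + κ) ^ a := Real.rpow_pos_of_pos (by linarith) a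
  have hφle : (∫ s in (0:ℝ)..t₀, φ s) ≤ M ^ ε * ((1 + κ + t₀) ^ a / a) := by
    rw [hφint]
    apply mul_le_mul_of_nonneg_left _ (Real.rpow_nonneg hM0.le ε)
    gcongr
    linarith
  have hκle : κ ≤ (1 + κ + t₀) ^ a := by
    calc κ ≤ 1 + κ + t₀ := by linarith
      _ = (1 + κ + t₀) ^ (1:ℝ) := (Real.rpow_one _).symm
      _ ≤ (1 + κ + t₀) ^ a := Real.rpow_le_rpow_of_exponent_le hbase ha1
  have hMε : (0:ℝ) ≤ M ^ ε := Real.rpow_nonneg hM0.le ε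
  calc f t₀ ≤ C * (κ + a * ∫ s in (0:ℝ)..t₀, (g s) ^ ε) := hineq
    _ ≤ C * (κ + a * (M ^ ε * ((1 + κ + t₀) ^ a / a))) := by
        apply mul_le_mul_of_nonneg_left _ hC.le
        have : a * (∫ s in (0:ℝ)..t₀, (g s) ^ ε) ≤ a * (M ^ ε * ((1 + κ + t₀) ^ a / a)) :=
          mul_le_mul_of_nonneg_left (hmono.trans hφle) ha0.le
        linarith
    _ = C * (κ + M ^ ε * (1 + κ + t₀) ^ a) := by field_simp
    _ ≤ C * ((1 + κ + t₀) ^ a + M ^ ε * (1 + κ + t₀) ^ a) := by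
        apply mul_le_mul_of_nonneg_left _ hC.le
        linarith
    _ = C * (1 + M ^ ε) * (1 + κ + t₀) ^ a := by ring
    _ < M * (1 + κ + t₀) ^ a := by
        exact mul_lt_mul_of_pos_right hCM hpow_pos

/-- Estimates on solutions of a system of coupled nonlinear integral inequalities
(first part): if `0 ≤ ε₁, ε₂ < 1`, `A₁ = (1+ε₁)/(1-ε₁ε₂)`, `A₂ = (1+ε₂)/(1-ε₁ε₂)`,
then for every `C > 0` there is `M > 0` (depending only on `C, ε₁, ε₂`) such that any
nonnegative continuous `h, v` on `[0,T]` satisfying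
`h t ≤ C (κ + A₁ ∫₀ᵗ v(s)^ε₁ ds)` and `v t ≤ C (κ + A₂ ∫₀ᵗ h(s)^ε₂ ds)`
obey `h t ≤ M (1+κ+t)^A₁` and `v t ≤ M (1+κ+t)^A₂`. -/
theorem stmt1 (ε₁ ε₂ : ℝ) (hε₁ : ε₁ ∈ Ico (0:ℝ) 1) (hε₂ : ε₂ ∈ Ico (0:ℝ) 1)
    (A₁ A₂ : ℝ) (hA₁ : A₁ = (1 + ε₁) / (1 - ε₁ * ε₂)) (hA₂ : A₂ = (1 + ε₂) / (1 - ε₁ * ε₂)) :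
    ∀ C : ℝ, 0 < C → ∃ M : ℝ, 0 < M ∧
      ∀ T : ℝ, 0 < T → ∀ κ : ℝ, 0 < κ → ∀ h v : ℝ → ℝ,
        ContinuousOn h (Icc 0 T) → ContinuousOn v (Icc 0 T) →
        (∀ t ∈ Icc (0:ℝ) T, 0 ≤ h t) → (∀ t ∈ Icc (0:ℝ) T, 0 ≤ v t) →
        (∀ t ∈ Icc (0:ℝ) T, h t ≤ C * (κ + A₁ * ∫ s in (0:ℝ)..t, (v s) ^ ε₁)) →
        (∀ t ∈ Icc (0:ℝ) T, v t ≤ C * (κ + A₂ * ∫ s in (0:ℝ)..t, (h s) ^ ε₂)) →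
        ∀ t ∈ Icc (0:ℝ) T,
          h t ≤ M * (1 + κ + t) ^ A₁ ∧ v t ≤ M * (1 + κ + t) ^ A₂ := by
  obtain ⟨hε₁0, hε₁1⟩ := hε₁
  obtain ⟨hε₂0, hε₂1⟩ := hε₂
  have hprod : ε₁ * ε₂ < 1 := by nlinarith
  have hden : (0:ℝ) < 1 - ε₁ * ε₂ := by linarith
  have hA₁' : A₁ = ε₁ * A₂ + 1 := by rw [hA₁, hA₂]; field_simp; ring
  have hA₂' : A₂ = ε₂ * A₁ + 1 := by
    rw [hA₁, hA₂, eq_comm, mul_div_assoc', div_add_one hden.ne']; congr 1; ring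
  have hA₁pos : (0:ℝ) < A₁ := by rw [hA₁]; positivity
  have hA₂pos : (0:ℝ) < A₂ := by rw [hA₂]; positivity
  intro C hC
  set e : ℝ := max ε₁ ε₂ with he_def
  have he0 : (0:ℝ) ≤ e := le_trans hε₁0 (le_max_left _ _)
  have he1 : e < 1 := max_lt hε₁1 hε₂1
  set M : ℝ := (2 * C + 1) ^ ((1:ℝ) / (1 - e)) with hM_def
  have h2C : (1:ℝ) ≤ 2 * C + 1 := by linarith
  have hM1 : (1:ℝ) ≤ M := Real.one_le_rpow h2C (le_of_lt (div_pos one_pos (by linarith)))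
  have hM0 : (0:ℝ) < M := lt_of_lt_of_le one_pos hM1
  have hMsplit : M = (2 * C + 1) * M ^ e := by
    have h1 : M ^ (1 - e) = 2 * C + 1 := by
      rw [hM_def, ← Real.rpow_mul (by linarith : (0:ℝ) ≤ 2 * C + 1)]
      have he : 1 / (1 - e) * (1 - e) = 1 := by
        field_simp
        exact div_self (by linarith)
      rw [he, Real.rpow_one]
    calc M = M ^ ((1 - e) + e) := by rw [sub_add_cancel, Real.rpow_one]
      _ = M ^ (1 - e) * M ^ e := Real.rpow_add hM0 _ _
      _ = (2 * C + 1) * M ^ e := by rw [h1]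
  have hCM : ∀ ε' : ℝ, 0 ≤ ε' → ε' ≤ e → C * (1 + M ^ ε') < M := by
    intro ε' h0 hle
    have h1 : M ^ ε' ≤ M ^ e := Real.rpow_le_rpow_of_exponent_le hM1 hle
    have h2 : (1:ℝ) ≤ M ^ e := Real.one_le_rpow hM1 he0
    have h3 : (0:ℝ) < M ^ e := lt_of_lt_of_le one_pos h2
    calc C * (1 + M ^ ε') ≤ C * (M ^ e + M ^ e) := by nlinarith
      _ = 2 * C * M ^ e := by ring
      _ < (2 * C + 1) * M ^ e := by nlinarith
      _ = M := hMsplit.symm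
  refine ⟨M, hM0, ?_⟩
  intro T hT κ hκ h v hch hcv hhnn hvnn hih hiv
  set b₁ : ℝ → ℝ := fun t => M * (1 + κ + t) ^ A₁ with hb₁def
  set b₂ : ℝ → ℝ := fun t => M * (1 + κ + t) ^ A₂ with hb₂def
  -- the "bad" set
  set S : Set ℝ := {t | t ∈ Icc (0:ℝ) T ∧ (b₁ t ≤ h t ∨ b₂ t ≤ v t)} with hSdef
  have hmain : ∀ t ∈ Icc (0:ℝ) T, h t < b₁ t ∧ v t < b₂ t := by
    by_contra hcon
    push_neg at hcon
    obtain ⟨t, htI, ht⟩ := hcon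
    have hSne : S.Nonempty := by
      refine ⟨t, htI, ?_⟩
      by_cases h1 : h t < b₁ t
      · exact Or.inr (ht h1)
      · exact Or.inl (le_of_not_gt h1)
    have hb₁c : ContinuousOn b₁ (Icc 0 T) :=
      continuousOn_const.mul (((continuous_const.add continuous_id').continuousOn).rpow_const
        (fun x _ => Or.inr hA₁pos.le))
    have hb₂c : ContinuousOn b₂ (Icc 0 T) :=
      continuousOn_const.mul (((continuous_const.add continuous_id').continuousOn).rpow_const
        (fun x _ => Or.inr hA₂pos.le))
    have hSclosed : IsClosed S := by
      have h1 : IsClosed (Icc (0:ℝ) T ∩ (fun t => h t - b₁ t) ⁻¹' Ici 0) :=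
        ((hch.sub hb₁c).preimage_isClosed_of_isClosed isClosed_Icc isClosed_Ici)
      have h2 : IsClosed (Icc (0:ℝ) T ∩ (fun t => v t - b₂ t) ⁻¹' Ici 0) :=
        ((hcv.sub hb₂c).preimage_isClosed_of_isClosed isClosed_Icc isClosed_Ici)
      have : S = (Icc (0:ℝ) T ∩ (fun t => h t - b₁ t) ⁻¹' Ici 0)
          ∪ (Icc (0:ℝ) T ∩ (fun t => v t - b₂ t) ⁻¹' Ici 0) := by
        ext x
        simp only [hSdef, mem_setOf_eq, mem_union, mem_inter_iff, mem_preimage, mem_Ici,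
          sub_nonneg]
        tauto
      rw [this]
      exact h1.union h2
    have hSbdd : BddBelow S := ⟨0, fun x hx => hx.1.1⟩
    set t₀ : ℝ := sInf S with ht₀def
    have ht₀S : t₀ ∈ S := hSclosed.csInf_mem hSne hSbdd
    obtain ⟨ht₀I, ht₀bad⟩ := ht₀S
    have hbefore : ∀ s ∈ Ico (0:ℝ) t₀, h s < b₁ s ∧ v s < b₂ s := by
      intro s hs
      have hsnot : s ∉ S := fun hsS => absurd (csInf_le hSbdd hsS) (not_le.2 hs.2)
      have hsI : s ∈ Icc (0:ℝ) T := ⟨hs.1, le_trans hs.2.le ht₀I.2⟩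
      rw [hSdef] at hsnot
      simp only [mem_setOf_eq, not_and, not_or, not_le] at hsnot
      exact hsnot hsI
    have hkey1 : h t₀ < b₁ t₀ := by
      have := key_step ε₁ A₁ A₂ C M κ T t₀ hε₁0 hA₂pos.le hA₁' hC hM1
        (hCM ε₁ hε₁0 (le_max_left _ _)) hκ h v hcv hvnn ht₀I (hih t₀ ht₀I)
        (fun s hs => (hbefore s hs).2.le)
      exact this
    have hkey2 : v t₀ < b₂ t₀ := by
      have := key_step ε₂ A₂ A₁ C M κ T t₀ hε₂0 hA₁pos.le hA₂' hC hM1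
        (hCM ε₂ hε₂0 (le_max_right _ _)) hκ v h hch hhnn ht₀I (hiv t₀ ht₀I)
        (fun s hs => (hbefore s hs).1.le)
      exact this
    rcases ht₀bad with hb | hb
    · exact absurd hb (not_le.2 hkey1)
    · exact absurd hb (not_le.2 hkey2)
  intro t htI
  exact ⟨(hmain t htI).1.le, (hmain t htI).2.le⟩
end

section
/- Let ε₂ ∈ (0,1) and ε₁ > 1 with ε₁ε₂ < 1. Set A₁ = (1+ε₁)/(1−ε₁ε₂), A₂ = (1+ε₂)/(1−ε₁ε₂), and B₂ = A₂/ε₂. For every C > 0 there exists a constant M > 0, depending only on C, ε₁ and ε₂, with the following property: for every T > 0, every κ > 0, and every pair of continuous functions h, v : [0,T] → [0,∞) satisfying, for all t ∈ [0,T], h(t) ≤ C(κ + A₁ ∫₀ᵗ v(s)^{ε₁ε₂} ds) and v(t) ≤ C(κ + B₂ ∫₀ᵗ h(s)^{ε₂} v(s)^{1−ε₂} ds), one has h(t) ≤ M (1 + κ + t)^{A₁} and v(t) ≤ M (1 + κ + t)^{B₂} for all t ∈ [0,T]. -/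
open Set


-- helper 1: integral of (1+κ+s)^β
lemma lemA {κ β t : ℝ} (hκ : 0 ≤ κ) (hβ : 0 ≤ β) (ht : 0 ≤ t) :
    ∫ s in (0:ℝ)..t, (1 + κ + s) ^ β ≤ (1 + κ + t) ^ (β + 1) / (β + 1) := by
  have h1 : (∫ s in (0:ℝ)..t, (1 + κ + s) ^ β)
      = ∫ x in (1+κ+0)..(1+κ+t), x ^ β :=
    intervalIntegral.integral_comp_add_left (fun x => x ^ β) (1+κ)
  rw [h1, integral_rpow (Or.inl (by linarith : (-1:ℝ) < β))]
  have h2 : (0:ℝ) ≤ (1 + κ + 0) ^ (β + 1) := Real.rpow_nonneg (by linarith) _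
  have h3 : (0:ℝ) < β + 1 := by linarith
  gcongr
  linarith

-- helper 2: (a+b)^q ≤ 2^q (a^q+b^q)
lemma lemB {x y q : ℝ} (hx : 0 ≤ x) (hy : 0 ≤ y) (hq : 0 ≤ q) :
    (x + y) ^ q ≤ 2 ^ q * (x ^ q + y ^ q) := by
  have h1 : x + y ≤ 2 * max x y := by
    rcases le_total x y with h | h
    · simp [max_eq_right h]; linarith
    · simp [max_eq_left h]; linarith
  calc (x + y) ^ q ≤ (2 * max x y) ^ q :=
        Real.rpow_le_rpow (by positivity) h1 hq
    _ = 2 ^ q * (max x y) ^ q := Real.mul_rpow (by norm_num) (le_max_iff.2 (Or.inl hx))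
    _ ≤ 2 ^ q * (x ^ q + y ^ q) := by
        apply mul_le_mul_of_nonneg_left _ (by positivity)
        rcases max_cases x y with ⟨h1', _⟩ | ⟨h1', _⟩ <;> rw [h1']
        · nlinarith [Real.rpow_nonneg hy q]
        · nlinarith [Real.rpow_nonneg hx q]

lemma lemC {T K c ε₂ : ℝ} (hT : 0 < T) (hK : 0 < K) (hc : 0 ≤ c)
    (hε₂0 : 0 < ε₂) (hε₂1 : ε₂ < 1)
    {H V : ℝ → ℝ} (hHc : Continuous H) (hVc : Continuous V)
    (hH0 : ∀ x, 0 ≤ H x) (hV0 : ∀ x, 0 ≤ V x)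
    (hyp : ∀ t ∈ Icc (0:ℝ) T, V t ≤ K + c * ∫ s in (0:ℝ)..t, H s ^ ε₂ * V s ^ (1-ε₂)) :
    ∀ t ∈ Icc (0:ℝ) T,
      V t ≤ (K ^ ε₂ + ε₂ * c * ∫ s in (0:ℝ)..t, H s ^ ε₂) ^ (1/ε₂) := by
  set g : ℝ → ℝ := fun s => H s ^ ε₂ * V s ^ (1-ε₂) with hg
  have hgc : Continuous g :=
    (hHc.rpow_const fun s => Or.inr hε₂0.le).mul
      (hVc.rpow_const fun s => Or.inr (by linarith))
  have hgn : ∀ s, 0 ≤ g s := fun s =>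
    mul_nonneg (Real.rpow_nonneg (hH0 s) _) (Real.rpow_nonneg (hV0 s) _)
  set w : ℝ → ℝ := fun t => K + c * ∫ s in (0:ℝ)..t, g s with hwdef
  have hw : ∀ t, HasDerivAt w (c * g t) t := fun t =>
    (((hgc.integral_hasStrictDerivAt 0 t).hasDerivAt).const_mul c).const_add K
  have hwc : Continuous w := continuous_iff_continuousAt.2 fun t => (hw t).continuousAt
  have hwpos : ∀ t, 0 ≤ t → 0 < w t := by
    intro t ht
    have : 0 ≤ ∫ s in (0:ℝ)..t, g s :=
      intervalIntegral.integral_nonneg ht (fun s _ => hgn s)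
    have := mul_nonneg hc this
    simp only [hwdef]; linarith
  have hHε : Continuous (fun s => H s ^ ε₂) := hHc.rpow_const fun s => Or.inr hε₂0.le
  set F : ℝ → ℝ := fun t => w t ^ ε₂ - ε₂ * c * ∫ s in (0:ℝ)..t, H s ^ ε₂ with hFdef
  have hFd : ∀ t ∈ Ioo (0:ℝ) T,
      HasDerivAt F (c * g t * ε₂ * w t ^ (ε₂-1) - ε₂ * c * H t ^ ε₂) t := by
    intro t ht
    exact ((hw t).rpow_const (Or.inl (ne_of_gt (hwpos t ht.1.le)))).sub
      (((hHε.integral_hasStrictDerivAt 0 t).hasDerivAt).const_mul (ε₂ * c))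
  have hF'le : ∀ t ∈ Ioo (0:ℝ) T, deriv F t ≤ 0 := by
    intro t ht
    rw [(hFd t ht).deriv]
    have hwt : 0 < w t := hwpos t ht.1.le
    have hVw : V t ≤ w t := hyp t ⟨ht.1.le, ht.2.le⟩
    have hgle : g t ≤ H t ^ ε₂ * w t ^ (1-ε₂) :=
      mul_le_mul_of_nonneg_left
        (Real.rpow_le_rpow (hV0 t) hVw (by linarith)) (Real.rpow_nonneg (hH0 t) _)
    have key : w t ^ (1-ε₂) * w t ^ (ε₂-1) = 1 := by
      rw [← Real.rpow_add hwt]; norm_num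
    have : c * g t * ε₂ * w t ^ (ε₂-1)
        ≤ c * (H t ^ ε₂ * w t ^ (1-ε₂)) * ε₂ * w t ^ (ε₂-1) := by
      apply mul_le_mul_of_nonneg_right _ (Real.rpow_nonneg hwt.le _)
      exact mul_le_mul_of_nonneg_right
        (mul_le_mul_of_nonneg_left hgle hc) hε₂0.le
    have h2 : c * (H t ^ ε₂ * w t ^ (1-ε₂)) * ε₂ * w t ^ (ε₂-1)
        = ε₂ * c * H t ^ ε₂ * (w t ^ (1-ε₂) * w t ^ (ε₂-1)) := by ring
    rw [h2, key, mul_one] at this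
    linarith
  have hFc : Continuous F := by
    refine ((hwc.rpow_const fun x => Or.inr hε₂0.le).sub ?_)
    exact continuous_const.mul (continuous_iff_continuousAt.2 fun t =>
      ((hHε.integral_hasStrictDerivAt 0 t).hasDerivAt).continuousAt)
  have hanti : AntitoneOn F (Icc 0 T) := by
    apply antitoneOn_of_deriv_nonpos (convex_Icc 0 T) hFc.continuousOn
    · intro x hx
      rw [interior_Icc] at hx
      exact (hFd x hx).differentiableAt.differentiableWithinAt
    · intro x hx
      rw [interior_Icc] at hx
      exact hF'le x hx
  intro t ht
  have hFt : F t ≤ F 0 := hanti (left_mem_Icc.2 hT.le) ht ht.1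
  have hF0 : F 0 = K ^ ε₂ := by
    simp [hFdef, hwdef, intervalIntegral.integral_same]
  have hwb : w t ^ ε₂ ≤ K ^ ε₂ + ε₂ * c * ∫ s in (0:ℝ)..t, H s ^ ε₂ := by
    have := hFt; rw [hF0] at this; simp only [hFdef] at this; linarith
  have hwt : 0 < w t := hwpos t ht.1
  calc V t ≤ w t := hyp t ht
    _ = (w t ^ ε₂) ^ (1/ε₂) := by
        rw [← Real.rpow_mul hwt.le, mul_one_div, div_self (ne_of_gt hε₂0), Real.rpow_one]
    _ ≤ (K ^ ε₂ + ε₂ * c * ∫ s in (0:ℝ)..t, H s ^ ε₂) ^ (1/ε₂) :=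
        Real.rpow_le_rpow (Real.rpow_nonneg hwt.le _) hwb (by positivity)

set_option maxHeartbeats 1000000 in
/-- Estimates on solutions of a system of coupled nonlinear integral inequalities
(second part): if `0 < ε₂ < 1 < ε₁` with `ε₁ ε₂ < 1`, `A₁ = (1+ε₁)/(1-ε₁ε₂)`,
`A₂ = (1+ε₂)/(1-ε₁ε₂)` and `B₂ = A₂/ε₂`, then for every `C > 0` there is `M > 0`
(depending only on `C, ε₁, ε₂`) such that any nonnegative continuous `h, v` on `[0,T]`
satisfying `h t ≤ C (κ + A₁ ∫₀ᵗ v(s)^(ε₁ε₂) ds)` and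
`v t ≤ C (κ + B₂ ∫₀ᵗ h(s)^(ε₂) v(s)^(1-ε₂) ds)` obey
`h t ≤ M (1+κ+t)^A₁` and `v t ≤ M (1+κ+t)^B₂`. -/
theorem stmt2 (ε₁ ε₂ : ℝ) (hε₂ : ε₂ ∈ Ioo (0:ℝ) 1) (hε₁ : 1 < ε₁) (hε₁ε₂ : ε₁ * ε₂ < 1)
    (A₁ A₂ B₂ : ℝ) (hA₁ : A₁ = (1 + ε₁) / (1 - ε₁ * ε₂))
    (hA₂ : A₂ = (1 + ε₂) / (1 - ε₁ * ε₂)) (hB₂ : B₂ = A₂ / ε₂) :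
    ∀ C : ℝ, 0 < C → ∃ M : ℝ, 0 < M ∧
      ∀ T : ℝ, 0 < T → ∀ κ : ℝ, 0 < κ → ∀ h v : ℝ → ℝ,
        ContinuousOn h (Icc 0 T) → ContinuousOn v (Icc 0 T) →
        (∀ t ∈ Icc (0:ℝ) T, 0 ≤ h t) → (∀ t ∈ Icc (0:ℝ) T, 0 ≤ v t) →
        (∀ t ∈ Icc (0:ℝ) T, h t ≤ C * (κ + A₁ * ∫ s in (0:ℝ)..t, (v s) ^ (ε₁ * ε₂))) →
        (∀ t ∈ Icc (0:ℝ) T,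
          v t ≤ C * (κ + B₂ * ∫ s in (0:ℝ)..t, (h s) ^ ε₂ * (v s) ^ (1 - ε₂))) →
        ∀ t ∈ Icc (0:ℝ) T,
          h t ≤ M * (1 + κ + t) ^ A₁ ∧ v t ≤ M * (1 + κ + t) ^ B₂ := by
  intro C hC
  have hε₂0 : 0 < ε₂ := hε₂.1
  have hε₂1 : ε₂ < 1 := hε₂.2
  have hd : 0 < 1 - ε₁ * ε₂ := by linarith
  have ha0 : 0 < ε₁ * ε₂ := by nlinarith
  have hA₁1 : 1 < A₁ := by rw [hA₁, lt_div_iff₀ hd]; nlinarith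
  have hA₂1 : 1 < A₂ := by rw [hA₂, lt_div_iff₀ hd]; nlinarith
  have hB₂1 : 1 < B₂ := by rw [hB₂, lt_div_iff₀ hε₂0]; nlinarith
  have idA₂ : A₁ * ε₂ + 1 = A₂ := by rw [hA₁, hA₂]; field_simp; ring
  have idA₁ : B₂ * (ε₁ * ε₂) + 1 = A₁ := by
    rw [hB₂, hA₂, hA₁]; field_simp
    rw [div_add_one (by rw [mul_comm]; exact hd.ne' : 1 - ε₂ * ε₁ ≠ 0)]; congr 1; ring
  set a : ℝ := ε₁ * ε₂ with hadef
  set q : ℝ := 1/ε₂ with hqdef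
  have hq0 : 0 < q := by positivity
  have hq1 : 1 ≤ q := by rw [hqdef]; rw [le_div_iff₀ hε₂0]; linarith
  set c : ℝ := ε₂ * (C * B₂) / A₂ with hcdef
  have hcpos : 0 < c := by
    apply div_pos _ (by linarith); positivity
  set K₂ : ℝ := C * (2:ℝ) ^ (q * a) * (C + c ^ q) ^ a with hK₂def
  have hcq : 0 < c ^ q := Real.rpow_pos_of_pos hcpos q
  have hK₂ : 0 < K₂ := by
    apply mul_pos (mul_pos hC (Real.rpow_pos_of_pos (by norm_num) _))
    exact Real.rpow_pos_of_pos (by linarith) _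
  set M₀ : ℝ := max (2*C + 1) ((2*K₂) ^ (1/(1 - a))) with hM₀def
  have hM₀C : 2*C + 1 ≤ M₀ := le_max_left _ _
  have hM₀1 : 1 ≤ M₀ := by linarith [hM₀C, hC]
  have hM₀pos : 0 < M₀ := by linarith
  -- the improvement constant is strictly below M₀
  have hΦ : C * (1 + (2^q * (C + c^q * M₀)) ^ a) < M₀ := by
    have h1 : C + c^q * M₀ ≤ (C + c^q) * M₀ := by nlinarith
    have h2 : (2^q * (C + c^q * M₀)) ^ a ≤ (2^q * ((C + c^q) * M₀)) ^ a := by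
      apply Real.rpow_le_rpow (by positivity)
        (mul_le_mul_of_nonneg_left h1 (by positivity)) (by positivity)
    have h3 : (2^q * ((C + c^q) * M₀)) ^ a
        = (2:ℝ)^(q*a) * (C + c^q) ^ a * M₀ ^ a := by
      rw [Real.mul_rpow (by positivity) (by positivity),
        Real.mul_rpow (by positivity) (by positivity),
        ← Real.rpow_mul (by norm_num : (0:ℝ) ≤ 2), mul_assoc]
    have hbase : (0:ℝ) < (2*K₂) ^ (1/(1-a)) := Real.rpow_pos_of_pos (by linarith) _
    have hble : (2*K₂) ^ (1/(1-a)) ≤ M₀ := le_max_right _ _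
    have h4 : M₀ ^ (a - 1) ≤ ((2*K₂) ^ (1/(1-a))) ^ (a-1) :=
      Real.rpow_le_rpow_of_nonpos hbase hble (by linarith)
    have h5 : ((2*K₂)^(1/(1-a)))^(a-1) = (2*K₂)⁻¹ := by
      rw [← Real.rpow_mul (by linarith : (0:ℝ) ≤ 2*K₂)]
      have he : (1/(1-a)) * (a-1) = -1 := by
        field_simp
        ring
      rw [he, Real.rpow_neg_one]
    have hM₀a : M₀ ^ a = M₀ ^ (a-1) * M₀ := by
      rw [← Real.rpow_add_one (ne_of_gt hM₀pos) (a-1)]; norm_num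
    have h6 : K₂ * M₀ ^ a ≤ M₀ / 2 := by
      rw [hM₀a]
      calc K₂ * (M₀ ^ (a-1) * M₀) ≤ K₂ * ((2*K₂)⁻¹ * M₀) := by
            apply mul_le_mul_of_nonneg_left _ hK₂.le
            apply mul_le_mul_of_nonneg_right (h4.trans_eq h5) hM₀pos.le
        _ = M₀ / 2 := by field_simp
    calc C * (1 + (2^q * (C + c^q * M₀)) ^ a)
        ≤ C * (1 + (2:ℝ)^(q*a) * (C + c^q) ^ a * M₀ ^ a) := by
          apply mul_le_mul_of_nonneg_left _ hC.le
          have := h2.trans_eq h3; linarith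
      _ = C + K₂ * M₀ ^ a := by rw [hK₂def]; ring
      _ ≤ C + M₀ / 2 := by linarith
      _ < M₀ := by linarith
  set D : ℝ := 2^q * (C + c^q * M₀) with hDdef
  have hDpos : 0 < D := by
    apply mul_pos (Real.rpow_pos_of_pos (by norm_num) _); nlinarith
  refine ⟨M₀ + D, by positivity, ?_⟩
  intro T hT κ hκ h v hhc hvc hh0 hv0 hih hiv
  have hTle := hT.le
  set H : ℝ → ℝ := IccExtend hTle (fun x : Icc (0:ℝ) T => h ↑x) with hHdef
  set V : ℝ → ℝ := IccExtend hTle (fun x : Icc (0:ℝ) T => v ↑x) with hVdef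
  have hHcont : Continuous H := (continuousOn_iff_continuous_restrict.1 hhc).Icc_extend'
  have hVcont : Continuous V := (continuousOn_iff_continuous_restrict.1 hvc).Icc_extend'
  have HeqOn : ∀ x ∈ Icc (0:ℝ) T, H x = h x := fun x hx => IccExtend_of_mem hTle _ hx
  have VeqOn : ∀ x ∈ Icc (0:ℝ) T, V x = v x := fun x hx => IccExtend_of_mem hTle _ hx
  have H0 : ∀ x, 0 ≤ H x := by
    intro x; rw [hHdef, IccExtend_apply]; exact hh0 _ (projIcc (0:ℝ) T hTle x).2
  have V0 : ∀ x, 0 ≤ V x := by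
    intro x; rw [hVdef, IccExtend_apply]; exact hv0 _ (projIcc (0:ℝ) T hTle x).2
  set P : ℝ → ℝ := fun s => 1 + κ + s with hPdef
  have hPcont : Continuous P := by
    rw [hPdef]; exact (continuous_const.add continuous_id)
  have hPpos : ∀ s, 0 ≤ s → 0 < P s := fun s hs => by
    simp only [hPdef]; linarith
  have hP1 : ∀ s, 0 ≤ s → 1 ≤ P s := fun s hs => by
    simp only [hPdef]; linarith
  have hihH : ∀ t ∈ Icc (0:ℝ) T, H t ≤ C * (κ + A₁ * ∫ s in (0:ℝ)..t, V s ^ a) := by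
    intro t ht
    have e1 : (∫ s in (0:ℝ)..t, V s ^ a) = ∫ s in (0:ℝ)..t, v s ^ a := by
      apply intervalIntegral.integral_congr
      intro s hs
      rw [uIcc_of_le ht.1] at hs
      show V s ^ a = v s ^ a
      rw [VeqOn s ⟨hs.1, hs.2.trans ht.2⟩]
    rw [HeqOn t ht, e1]; exact hih t ht
  have hivH : ∀ t ∈ Icc (0:ℝ) T,
      V t ≤ C * κ + (C * B₂) * ∫ s in (0:ℝ)..t, H s ^ ε₂ * V s ^ (1-ε₂) := by
    intro t ht
    have e1 : (∫ s in (0:ℝ)..t, H s ^ ε₂ * V s ^ (1-ε₂))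
        = ∫ s in (0:ℝ)..t, h s ^ ε₂ * v s ^ (1-ε₂) := by
      apply intervalIntegral.integral_congr
      intro s hs
      rw [uIcc_of_le ht.1] at hs
      have hsT : s ∈ Icc (0:ℝ) T := ⟨hs.1, hs.2.trans ht.2⟩
      show H s ^ ε₂ * V s ^ (1-ε₂) = h s ^ ε₂ * v s ^ (1-ε₂)
      rw [VeqOn s hsT, HeqOn s hsT]
    rw [VeqOn t ht, e1]
    calc v t ≤ C * (κ + B₂ * ∫ s in (0:ℝ)..t, h s ^ ε₂ * v s ^ (1-ε₂)) := hiv t ht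
      _ = C * κ + (C * B₂) * ∫ s in (0:ℝ)..t, h s ^ ε₂ * v s ^ (1-ε₂) := by ring
  have bernApp : ∀ t ∈ Icc (0:ℝ) T,
      V t ≤ ((C * κ) ^ ε₂ + ε₂ * (C * B₂) * ∫ s in (0:ℝ)..t, H s ^ ε₂) ^ q :=
    lemC hT (by positivity) (by positivity) hε₂0 hε₂1 hHcont hVcont H0 V0 hivH
  -- Step V: from a polynomial bound on H up to time t, deduce one on V at t
  have stepV : ∀ t ∈ Icc (0:ℝ) T, (∀ s ∈ Icc (0:ℝ) t, H s ≤ M₀ * P s ^ A₁) →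
      V t ≤ D * P t ^ B₂ := by
    intro t ht hb
    have hIntNN : 0 ≤ ∫ s in (0:ℝ)..t, H s ^ ε₂ :=
      intervalIntegral.integral_nonneg ht.1 fun s _ => Real.rpow_nonneg (H0 s) _
    have hInt : (∫ s in (0:ℝ)..t, H s ^ ε₂) ≤ M₀ ^ ε₂ * (P t ^ A₂ / A₂) := by
      have mono : (∫ s in (0:ℝ)..t, H s ^ ε₂)
          ≤ ∫ s in (0:ℝ)..t, M₀ ^ ε₂ * P s ^ (A₁ * ε₂) := by
        apply intervalIntegral.integral_mono_on ht.1
        · exact (hHcont.rpow_const fun s => Or.inr hε₂0.le).intervalIntegrable _ _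
        · exact (continuous_const.mul (hPcont.rpow_const fun s =>
            Or.inr (by positivity))).intervalIntegrable _ _
        · intro s hs
          have hPs : 0 < P s := hPpos s hs.1
          calc H s ^ ε₂ ≤ (M₀ * P s ^ A₁) ^ ε₂ :=
                Real.rpow_le_rpow (H0 s) (hb s hs) hε₂0.le
            _ = M₀ ^ ε₂ * P s ^ (A₁ * ε₂) := by
                rw [Real.mul_rpow hM₀pos.le (Real.rpow_nonneg hPs.le _),
                  ← Real.rpow_mul hPs.le]
      have e2 : (∫ s in (0:ℝ)..t, M₀ ^ ε₂ * P s ^ (A₁ * ε₂))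
          = M₀ ^ ε₂ * ∫ s in (0:ℝ)..t, P s ^ (A₁ * ε₂) :=
        intervalIntegral.integral_const_mul _ _
      have e3 : (∫ s in (0:ℝ)..t, P s ^ (A₁ * ε₂)) ≤ P t ^ A₂ / A₂ := by
        have := lemA (κ := κ) (β := A₁ * ε₂) (t := t) hκ.le (by positivity) ht.1
        rw [idA₂] at this
        simpa only [hPdef] using this
      calc (∫ s in (0:ℝ)..t, H s ^ ε₂) ≤ M₀ ^ ε₂ * ∫ s in (0:ℝ)..t, P s ^ (A₁ * ε₂) := by
            rw [← e2]; exact mono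
        _ ≤ M₀ ^ ε₂ * (P t ^ A₂ / A₂) := by
            apply mul_le_mul_of_nonneg_left e3 (Real.rpow_nonneg hM₀pos.le _)
    have hPt0 : 0 < P t := hPpos t ht.1
    have hPt1 : 1 ≤ P t := hP1 t ht.1
    have h2 : (C * κ) ^ ε₂ + ε₂ * (C * B₂) * ∫ s in (0:ℝ)..t, H s ^ ε₂
        ≤ (C * κ) ^ ε₂ + c * M₀ ^ ε₂ * P t ^ A₂ := by
      have e4 : ε₂ * (C * B₂) * (M₀ ^ ε₂ * (P t ^ A₂ / A₂)) = c * M₀ ^ ε₂ * P t ^ A₂ := by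
        rw [hcdef]; field_simp
      have := mul_le_mul_of_nonneg_left hInt (by positivity : (0:ℝ) ≤ ε₂ * (C * B₂))
      linarith [this.trans_eq e4]
    have h3 : V t ≤ ((C * κ) ^ ε₂ + c * M₀ ^ ε₂ * P t ^ A₂) ^ q :=
      (bernApp t ht).trans (Real.rpow_le_rpow
        (add_nonneg (Real.rpow_nonneg (by positivity) _)
          (mul_nonneg (by positivity) hIntNN)) h2 hq0.le)
    have h4 : ((C * κ) ^ ε₂ + c * M₀ ^ ε₂ * P t ^ A₂) ^ q
        ≤ 2 ^ q * (((C * κ) ^ ε₂) ^ q + (c * M₀ ^ ε₂ * P t ^ A₂) ^ q) :=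
      lemB (Real.rpow_nonneg (by positivity) _) (by positivity) hq0.le
    have e5 : ((C * κ) ^ ε₂) ^ q = C * κ := by
      rw [← Real.rpow_mul (by positivity), hqdef, mul_one_div,
        div_self hε₂0.ne', Real.rpow_one]
    have e6 : (c * M₀ ^ ε₂ * P t ^ A₂) ^ q = c ^ q * M₀ * P t ^ B₂ := by
      rw [Real.mul_rpow (by positivity) (Real.rpow_nonneg hPt0.le _),
        Real.mul_rpow hcpos.le (Real.rpow_nonneg hM₀pos.le _),
        ← Real.rpow_mul hM₀pos.le, ← Real.rpow_mul hPt0.le]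
      have eq1 : ε₂ * q = 1 := by rw [hqdef]; field_simp
      have eq2 : A₂ * q = B₂ := by rw [hqdef, hB₂]; field_simp
      rw [eq1, eq2, Real.rpow_one]
    have hPB : P t ≤ P t ^ B₂ := by
      calc P t = P t ^ (1:ℝ) := (Real.rpow_one _).symm
        _ ≤ P t ^ B₂ := Real.rpow_le_rpow_of_exponent_le hPt1 hB₂1.le
    have hκP : κ ≤ P t := by simp only [hPdef]; linarith [ht.1]
    calc V t ≤ 2 ^ q * (C * κ + c ^ q * M₀ * P t ^ B₂) := by
          have := h3.trans h4; rw [e5, e6] at this; exact this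
      _ ≤ 2 ^ q * ((C + c ^ q * M₀) * P t ^ B₂) := by
          apply mul_le_mul_of_nonneg_left _ (by positivity)
          have hCκ : C * κ ≤ C * P t ^ B₂ :=
            mul_le_mul_of_nonneg_left (hκP.trans hPB) hC.le
          nlinarith
      _ = D * P t ^ B₂ := by rw [hDdef]; ring
  -- Step H: improvement of the H bound
  have stepH : ∀ t ∈ Icc (0:ℝ) T, (∀ s ∈ Icc (0:ℝ) t, H s ≤ M₀ * P s ^ A₁) →
      H t ≤ C * (1 + D ^ a) * P t ^ A₁ := by
    intro t ht hb
    have hVb : ∀ s ∈ Icc (0:ℝ) t, V s ≤ D * P s ^ B₂ := fun s hs =>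
      stepV s ⟨hs.1, hs.2.trans ht.2⟩ (fun u hu => hb u ⟨hu.1, hu.2.trans hs.2⟩)
    have hInt : (∫ s in (0:ℝ)..t, V s ^ a) ≤ D ^ a * (P t ^ A₁ / A₁) := by
      have mono : (∫ s in (0:ℝ)..t, V s ^ a)
          ≤ ∫ s in (0:ℝ)..t, D ^ a * P s ^ (B₂ * a) := by
        apply intervalIntegral.integral_mono_on ht.1
        · exact (hVcont.rpow_const fun s => Or.inr ha0.le).intervalIntegrable _ _
        · exact (continuous_const.mul (hPcont.rpow_const fun s =>
            Or.inr (by positivity))).intervalIntegrable _ _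
        · intro s hs
          have hPs : 0 < P s := hPpos s hs.1
          calc V s ^ a ≤ (D * P s ^ B₂) ^ a :=
                Real.rpow_le_rpow (V0 s) (hVb s hs) ha0.le
            _ = D ^ a * P s ^ (B₂ * a) := by
                rw [Real.mul_rpow hDpos.le (Real.rpow_nonneg hPs.le _),
                  ← Real.rpow_mul hPs.le]
      have e2 : (∫ s in (0:ℝ)..t, D ^ a * P s ^ (B₂ * a))
          = D ^ a * ∫ s in (0:ℝ)..t, P s ^ (B₂ * a) :=
        intervalIntegral.integral_const_mul _ _
      have e3 : (∫ s in (0:ℝ)..t, P s ^ (B₂ * a)) ≤ P t ^ A₁ / A₁ := by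
        have := lemA (κ := κ) (β := B₂ * a) (t := t) hκ.le (by positivity) ht.1
        rw [idA₁] at this
        simpa only [hPdef] using this
      calc (∫ s in (0:ℝ)..t, V s ^ a) ≤ D ^ a * ∫ s in (0:ℝ)..t, P s ^ (B₂ * a) := by
            rw [← e2]; exact mono
        _ ≤ D ^ a * (P t ^ A₁ / A₁) := by
            apply mul_le_mul_of_nonneg_left e3 (Real.rpow_nonneg hDpos.le _)
    have hPt1 : 1 ≤ P t := hP1 t ht.1
    have hPA : P t ≤ P t ^ A₁ := by
      calc P t = P t ^ (1:ℝ) := (Real.rpow_one _).symm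
        _ ≤ P t ^ A₁ := Real.rpow_le_rpow_of_exponent_le hPt1 hA₁1.le
    have hκP : κ ≤ P t := by simp only [hPdef]; linarith [ht.1]
    calc H t ≤ C * (κ + A₁ * ∫ s in (0:ℝ)..t, V s ^ a) := hihH t ht
      _ ≤ C * (κ + A₁ * (D ^ a * (P t ^ A₁ / A₁))) := by
          apply mul_le_mul_of_nonneg_left _ hC.le
          have := mul_le_mul_of_nonneg_left hInt (by linarith : (0:ℝ) ≤ A₁)
          linarith
      _ = C * (κ + D ^ a * P t ^ A₁) := by
          congr 1
          field_simp
      _ ≤ C * (P t ^ A₁ + D ^ a * P t ^ A₁) := by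
          apply mul_le_mul_of_nonneg_left _ hC.le
          linarith [hκP.trans hPA]
      _ = C * (1 + D ^ a) * P t ^ A₁ := by ring
  -- Bootstrap via sInf of the bad set
  have main : ∀ t ∈ Icc (0:ℝ) T, H t ≤ M₀ * P t ^ A₁ := by
    by_contra hcon
    push_neg at hcon
    obtain ⟨t₁, ht₁, hbad⟩ := hcon
    set B : Set ℝ := {t | t ∈ Icc (0:ℝ) T ∧ M₀ * P t ^ A₁ < H t} with hBdef
    have hBne : B.Nonempty := ⟨t₁, ht₁, hbad⟩
    have hBbd : BddBelow B := ⟨0, fun x hx => hx.1.1⟩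
    set t₀ : ℝ := sInf B with ht₀def
    have ht₀cl : t₀ ∈ closure B := csInf_mem_closure hBne hBbd
    have hboundc : Continuous (fun t => M₀ * P t ^ A₁) :=
      continuous_const.mul (hPcont.rpow_const fun s => Or.inr (by linarith))
    have hGclosed : IsClosed {t : ℝ | H t ≤ M₀ * P t ^ A₁} := isClosed_le hHcont hboundc
    have hG'closed : IsClosed {t : ℝ | M₀ * P t ^ A₁ ≤ H t} := isClosed_le hboundc hHcont
    have ht₀ge : M₀ * P t₀ ^ A₁ ≤ H t₀ :=
      (hG'closed.closure_subset_iff.2 fun x hx => le_of_lt hx.2) ht₀cl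
    have ht₀Icc : t₀ ∈ Icc (0:ℝ) T :=
      (closure_minimal (fun x hx => hx.1) isClosed_Icc) ht₀cl
    have hIcoG : Ico (0:ℝ) t₀ ⊆ {t : ℝ | H t ≤ M₀ * P t ^ A₁} := by
      intro s hs
      by_contra hcon2
      have hsB : s ∈ B := ⟨⟨hs.1, hs.2.le.trans ht₀Icc.2⟩, not_le.1 hcon2⟩
      exact absurd (csInf_le hBbd hsB) (not_le.2 hs.2)
    have ht₀G : H t₀ ≤ M₀ * P t₀ ^ A₁ := by
      rcases eq_or_lt_of_le ht₀Icc.1 with h0 | h0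
      · have h00 : H 0 ≤ C * κ := by
          have := hihH 0 (left_mem_Icc.2 hTle)
          simpa using this
        have hP0 : 1 ≤ P 0 := hP1 0 le_rfl
        have hPA : P 0 ≤ P 0 ^ A₁ := by
          calc P 0 = P 0 ^ (1:ℝ) := (Real.rpow_one _).symm
            _ ≤ P 0 ^ A₁ := Real.rpow_le_rpow_of_exponent_le hP0 hA₁1.le
        have hκP : κ ≤ P 0 := by simp only [hPdef]; linarith
        rw [← h0]
        calc H 0 ≤ C * κ := h00
          _ ≤ M₀ * P 0 ^ A₁ := by nlinarith
      · have hcl : t₀ ∈ closure (Ico (0:ℝ) t₀) := by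
          rw [closure_Ico (ne_of_lt h0)]
          exact ⟨h0.le, le_rfl⟩
        exact (hGclosed.closure_subset_iff.2 hIcoG) hcl
    have hall : ∀ s ∈ Icc (0:ℝ) t₀, H s ≤ M₀ * P s ^ A₁ := by
      intro s hs
      rcases lt_or_eq_of_le hs.2 with hlt | hrfl
      · exact hIcoG ⟨hs.1, hlt⟩
      · rw [hrfl]; exact ht₀G
    have himp := stepH t₀ ht₀Icc hall
    have hPt₀pos : 0 < P t₀ ^ A₁ := Real.rpow_pos_of_pos (hPpos t₀ ht₀Icc.1) _
    have hfin : H t₀ < M₀ * P t₀ ^ A₁ := by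
      apply himp.trans_lt
      have hΦ' : C * (1 + D ^ a) < M₀ := by rw [hDdef]; exact hΦ
      exact mul_lt_mul_of_pos_right hΦ' hPt₀pos
    linarith
  -- conclude
  intro t ht
  have hPtpos : 0 < P t := hPpos t ht.1
  constructor
  · have h1 := main t ht
    rw [HeqOn t ht] at h1
    have h2 : M₀ * P t ^ A₁ ≤ (M₀ + D) * P t ^ A₁ := by
      have := Real.rpow_pos_of_pos hPtpos A₁
      nlinarith
    calc h t ≤ M₀ * P t ^ A₁ := h1
      _ ≤ (M₀ + D) * P t ^ A₁ := h2
      _ = (M₀ + D) * (1 + κ + t) ^ A₁ := by rw [hPdef]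
  · have h1 := stepV t ht (fun s hs => main s ⟨hs.1, hs.2.trans ht.2⟩)
    rw [VeqOn t ht] at h1
    have h2 : D * P t ^ B₂ ≤ (M₀ + D) * P t ^ B₂ := by
      have := Real.rpow_pos_of_pos hPtpos B₂
      nlinarith
    calc v t ≤ D * P t ^ B₂ := h1
      _ ≤ (M₀ + D) * P t ^ B₂ := h2
      _ = (M₀ + D) * (1 + κ + t) ^ B₂ := by rw [hPdef]
end

section
/- Let m > 0 and let F : ℝ → ℝ be a nondecreasing, right-continuous function such that F(x)/|x|^m → 0 as |x| → ∞. Then for every real p > m, the Lebesgue–Stieltjes measure μ_F associated with F satisfies ∫_ℝ min(1, |x|^{−p}) dμ_F(x) < ∞. -/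
open MeasureTheory Filter

private lemma pow_rpow_comm' {x : ℝ} (hx : 0 ≤ x) (y : ℝ) (n : ℕ) :
    (x ^ n) ^ y = (x ^ y) ^ n := by
  rw [← Real.rpow_natCast x n, ← Real.rpow_mul hx, ← Real.rpow_natCast (x ^ y) n,
    ← Real.rpow_mul hx, mul_comm]

private lemma cover_right' {R x : ℝ} (hR : 0 < R) (hx : R < x) :
    ∃ n : ℕ, R * 2 ^ n < x ∧ x ≤ R * 2 ^ (n + 1) := by
  classical
  have hex : ∃ k : ℕ, x ≤ R * 2 ^ (k + 1) := by
    obtain ⟨k, hk⟩ := pow_unbounded_of_one_lt (x / R) (one_lt_two (α := ℝ))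
    rw [div_lt_iff₀ hR] at hk
    refine ⟨k, ?_⟩
    have h2 : (0:ℝ) < 2 ^ k := by positivity
    have : (2:ℝ) ^ k ≤ 2 ^ (k+1) := by
      apply pow_le_pow_right₀ (by norm_num); omega
    nlinarith
  set n := Nat.find hex with hn
  have hspec : x ≤ R * 2 ^ (n + 1) := Nat.find_spec hex
  refine ⟨n, ?_, hspec⟩
  rcases Nat.eq_zero_or_pos n with h0 | h0
  · simpa [h0] using hx
  · have hmin := Nat.find_min hex (m := n - 1) (by omega)
    push_neg at hmin
    have : n - 1 + 1 = n := by omega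
    rw [this] at hmin
    exact hmin

private lemma cover_left' {R x : ℝ} (hR : 0 < R) (hx : R ≤ x) :
    ∃ n : ℕ, R * 2 ^ n ≤ x ∧ x < R * 2 ^ (n + 1) := by
  classical
  have hex : ∃ k : ℕ, x < R * 2 ^ (k + 1) := by
    obtain ⟨k, hk⟩ := pow_unbounded_of_one_lt (x / R) (one_lt_two (α := ℝ))
    rw [div_lt_iff₀ hR] at hk
    refine ⟨k, ?_⟩
    have h2 : (0:ℝ) < 2 ^ k := by positivity
    have : (2:ℝ) ^ k ≤ 2 ^ (k+1) := by
      apply pow_le_pow_right₀ (by norm_num); omega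
    nlinarith
  set n := Nat.find hex with hn
  have hspec : x < R * 2 ^ (n + 1) := Nat.find_spec hex
  refine ⟨n, ?_, hspec⟩
  rcases Nat.eq_zero_or_pos n with h0 | h0
  · simpa [h0] using hx
  · have hmin := Nat.find_min hex (m := n - 1) (by omega)
    push_neg at hmin
    have : n - 1 + 1 = n := by omega
    rw [this] at hmin
    exact hmin

/-- If `F : ℝ → ℝ` is nondecreasing and right-continuous (i.e. a Stieltjes function)
with `F(x)/|x|^m → 0` as `|x| → ∞` for some `m > 0`, then for every `p > m` the
Lebesgue–Stieltjes measure `μ_F` satisfies `∫ min(1, |x|^{-p}) dμ_F(x) < ∞`. -/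
theorem stmt6 (m p : ℝ) (hm : 0 < m) (hp : m < p) (F : StieltjesFunction ℝ)
    (hF : Tendsto (fun x : ℝ => F x / |x| ^ m) (cocompact ℝ) (nhds 0)) :
    ∫⁻ x : ℝ, ENNReal.ofReal (min 1 (|x| ^ (-p))) ∂ F.measure < ⊤ := by
  have hp0 : 0 < p := hm.trans hp
  -- Step 1: eventually |F x| ≤ |x| ^ m
  have hsmall : ∀ᶠ x : ℝ in cocompact ℝ, |F x| ≤ |x| ^ m := by
    have h1 := Metric.tendsto_nhds.mp hF 1 one_pos
    have h2 : ∀ᶠ x : ℝ in cocompact ℝ, (1:ℝ) ≤ |x| := by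
      rw [cocompact_eq_atBot_atTop, eventually_sup]
      constructor
      · filter_upwards [eventually_le_atBot (-1 : ℝ)] with x hx
        rw [abs_of_nonpos (by linarith)]; linarith
      · filter_upwards [eventually_ge_atTop (1 : ℝ)] with x hx
        rw [abs_of_nonneg (by linarith)]; linarith
    filter_upwards [h1, h2] with x hx1 hx2
    have hxm : (0:ℝ) < |x| ^ m := Real.rpow_pos_of_pos (by linarith) m
    rw [Real.dist_eq, sub_zero, abs_div, abs_of_pos hxm, div_lt_one hxm] at hx1
    exact hx1.le
  rw [cocompact_eq_atBot_atTop, eventually_sup, eventually_atBot, eventually_atTop] at hsmall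
  obtain ⟨⟨a, ha⟩, ⟨b, hb⟩⟩ := hsmall
  set R : ℝ := max 1 (max b (-a)) with hRdef
  have hR1 : (1:ℝ) ≤ R := le_max_left _ _
  have hR0 : (0:ℝ) < R := lt_of_lt_of_le one_pos hR1
  have key : ∀ x : ℝ, R ≤ |x| → |F x| ≤ |x| ^ m := by
    intro x hx
    rcases le_or_gt 0 x with h | h
    · rw [abs_of_nonneg h] at hx
      exact hb x (le_trans ((le_max_left b (-a)).trans (le_max_right _ _)) hx)
    · rw [abs_of_neg h] at hx
      have : -a ≤ -x := le_trans ((le_max_right b (-a)).trans (le_max_right _ _)) hx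
      exact ha x (by linarith)
  -- measure bounds on annuli
  have hμR : ∀ c : ℝ, R ≤ c → F.measure (Set.Ioc c (2*c)) ≤ ENNReal.ofReal (2 * (2*c) ^ m) := by
    intro c hc
    have hc0 : (0:ℝ) < c := lt_of_lt_of_le hR0 hc
    rw [StieltjesFunction.measure_Ioc]
    apply ENNReal.ofReal_le_ofReal
    have h1 := key (2*c) (by rw [abs_of_pos (by linarith)]; linarith)
    have h2 := key c (by rw [abs_of_pos hc0]; exact hc)
    rw [abs_of_pos (by linarith : (0:ℝ) < 2*c)] at h1
    rw [abs_of_pos hc0] at h2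
    have h3 : c ^ m ≤ (2*c) ^ m := Real.rpow_le_rpow hc0.le (by linarith) hm.le
    have h4 : F (2*c) ≤ (2*c) ^ m := (le_abs_self _).trans h1
    have h5 : -(c ^ m) ≤ F c := by have := (neg_abs_le (F c)); nlinarith [abs_nonneg (F c), h2]
    linarith
  have hμL : ∀ c : ℝ, R ≤ c →
      F.measure (Set.Ioc (-(2*c)) (-c)) ≤ ENNReal.ofReal (2 * (2*c) ^ m) := by
    intro c hc
    have hc0 : (0:ℝ) < c := lt_of_lt_of_le hR0 hc
    rw [StieltjesFunction.measure_Ioc]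
    apply ENNReal.ofReal_le_ofReal
    have h1 := key (-(2*c)) (by rw [abs_of_neg (by linarith)]; linarith)
    have h2 := key (-c) (by rw [abs_of_neg (by linarith)]; linarith)
    rw [abs_of_neg (by linarith : -(2*c) < (0:ℝ))] at h1
    rw [abs_of_neg (by linarith : -c < (0:ℝ))] at h2
    simp only [neg_neg] at h1 h2
    have h3 : c ^ m ≤ (2*c) ^ m := Real.rpow_le_rpow hc0.le (by linarith) hm.le
    have h4 : F (-c) ≤ c ^ m := (le_abs_self _).trans h2
    have h5 : -((2*c) ^ m) ≤ F (-(2*c)) := by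
      have := neg_abs_le (F (-(2*c))); linarith
    linarith
  -- pointwise bound
  have hpt : ∀ (c x : ℝ), 1 ≤ c → c ≤ |x| →
      ENNReal.ofReal (min 1 (|x| ^ (-p))) ≤ ENNReal.ofReal (c ^ (-p)) := by
    intro c x hc hcx
    apply ENNReal.ofReal_le_ofReal
    exact (min_le_right _ _).trans
      (Real.rpow_le_rpow_of_nonpos (lt_of_lt_of_le zero_lt_one hc) hcx (by linarith))
  set g : ℝ → ENNReal := fun x => ENNReal.ofReal (min 1 (|x| ^ (-p))) with hg
  -- tail term bound (both tails share a bound)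
  set T : ℕ → ENNReal := fun n =>
    ENNReal.ofReal ((R * 2 ^ n) ^ (-p) * (2 * (2 * (R * 2 ^ n)) ^ m)) with hT
  have hcn : ∀ n : ℕ, R ≤ R * 2 ^ n := fun n => by
    nlinarith [(one_le_pow₀ (one_le_two (α := ℝ)) : (1:ℝ) ≤ 2 ^ n), hR0]
  have h1cn : ∀ n : ℕ, (1:ℝ) ≤ R * 2 ^ n := fun n => le_trans hR1 (hcn n)
  have htermR : ∀ n : ℕ,
      ∫⁻ x in Set.Ioc (R * 2 ^ n) (R * 2 ^ (n+1)), g x ∂F.measure ≤ T n := by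
    intro n
    set c := R * 2 ^ n with hc
    have hstep : (R : ℝ) * 2 ^ (n+1) = 2 * c := by rw [hc]; ring
    calc ∫⁻ x in Set.Ioc c (R * 2 ^ (n+1)), g x ∂F.measure
        ≤ ∫⁻ _x in Set.Ioc c (R * 2 ^ (n+1)), ENNReal.ofReal (c ^ (-p)) ∂F.measure := by
          apply setLIntegral_mono measurable_const
          intro x hx
          exact hpt c x (h1cn n) (by
            rcases hx with ⟨hx1, _⟩
            have : (0:ℝ) < x := lt_of_lt_of_le (lt_of_lt_of_le hR0 (hcn n)) hx1.le
            rw [abs_of_pos this]; exact hx1.le)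
      _ = ENNReal.ofReal (c ^ (-p)) * F.measure (Set.Ioc c (2*c)) := by
          rw [setLIntegral_const, hstep]
      _ ≤ ENNReal.ofReal (c ^ (-p)) * ENNReal.ofReal (2 * (2*c) ^ m) :=
          mul_le_mul_right (hμR c (hcn n)) _
      _ = T n := by
          rw [← ENNReal.ofReal_mul (Real.rpow_nonneg (by positivity) _)]
  have htermL : ∀ n : ℕ,
      ∫⁻ x in Set.Ioc (-(R * 2 ^ (n+1))) (-(R * 2 ^ n)), g x ∂F.measure ≤ T n := by
    intro n
    set c := R * 2 ^ n with hc
    have hstep : (R : ℝ) * 2 ^ (n+1) = 2 * c := by rw [hc]; ring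
    calc ∫⁻ x in Set.Ioc (-(R * 2 ^ (n+1))) (-c), g x ∂F.measure
        ≤ ∫⁻ _x in Set.Ioc (-(R * 2 ^ (n+1))) (-c), ENNReal.ofReal (c ^ (-p)) ∂F.measure := by
          apply setLIntegral_mono measurable_const
          intro x hx
          exact hpt c x (h1cn n) (by
            rcases hx with ⟨_, hx2⟩
            have hx0 : x < 0 := lt_of_le_of_lt hx2 (by
              simp only [neg_neg, neg_lt_zero]; exact lt_of_lt_of_le hR0 (hcn n))
            rw [abs_of_neg hx0]; linarith)
      _ = ENNReal.ofReal (c ^ (-p)) * F.measure (Set.Ioc (-(2*c)) (-c)) := by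
          rw [setLIntegral_const, hstep]
      _ ≤ ENNReal.ofReal (c ^ (-p)) * ENNReal.ofReal (2 * (2*c) ^ m) :=
          mul_le_mul_right (hμL c (hcn n)) _
      _ = T n := by
          rw [← ENNReal.ofReal_mul (Real.rpow_nonneg (by positivity) _)]
  -- geometric sum
  have halg : ∀ n : ℕ, (R * 2 ^ n : ℝ) ^ (-p) * (2 * (2 * (R * 2 ^ n)) ^ m)
      = (2 * (2*R) ^ m * R ^ (-p)) * ((2:ℝ) ^ (m - p)) ^ n := by
    intro n
    have h2n : (0:ℝ) ≤ 2 ^ n := by positivity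
    rw [Real.mul_rpow hR0.le h2n,
      show (2 * (R * 2 ^ n) : ℝ) = (2*R) * 2 ^ n by ring,
      Real.mul_rpow (by positivity) h2n,
      pow_rpow_comm' (by norm_num) (-p) n, pow_rpow_comm' (by norm_num) m n,
      show (m - p) = m + (-p) by ring, Real.rpow_add (by norm_num : (0:ℝ) < 2), mul_pow]
    ring
  have hrlt : ((2:ℝ) ^ (m - p)) < 1 :=
    Real.rpow_lt_one_of_one_lt_of_neg one_lt_two (by linarith)
  have hr0 : (0:ℝ) ≤ (2:ℝ) ^ (m - p) := Real.rpow_nonneg (by norm_num) _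
  have hsum : ∑' n : ℕ, T n < ⊤ := by
    have : ∀ n : ℕ, T n = ENNReal.ofReal (2 * (2*R) ^ m * R ^ (-p)) *
        (ENNReal.ofReal ((2:ℝ) ^ (m - p))) ^ n := by
      intro n
      rw [hT]
      simp only
      rw [halg n, ENNReal.ofReal_mul (by positivity), ENNReal.ofReal_pow hr0]
    rw [tsum_congr this, ENNReal.tsum_mul_left, ENNReal.tsum_geometric]
    apply ENNReal.mul_lt_top ENNReal.ofReal_lt_top
    rw [ENNReal.inv_lt_top]
    exact tsub_pos_of_lt (ENNReal.ofReal_lt_one.mpr hrlt)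
  -- subsets
  have hsubR : Set.Ioi R ⊆ ⋃ n : ℕ, Set.Ioc (R * 2 ^ n) (R * 2 ^ (n+1)) := by
    intro x hx
    obtain ⟨n, h1, h2⟩ := cover_right' hR0 hx
    exact Set.mem_iUnion.mpr ⟨n, h1, h2⟩
  have hsubL : Set.Iic (-R) ⊆ ⋃ n : ℕ, Set.Ioc (-(R * 2 ^ (n+1))) (-(R * 2 ^ n)) := by
    intro x hx
    obtain ⟨n, h1, h2⟩ := cover_left' hR0 (by have hx' : x ≤ -R := hx; linarith : R ≤ -x)
    exact Set.mem_iUnion.mpr ⟨n, by linarith, by linarith⟩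
  -- tail integrals
  have htailR : ∫⁻ x in Set.Ioi R, g x ∂F.measure < ⊤ := by
    calc ∫⁻ x in Set.Ioi R, g x ∂F.measure
        ≤ ∫⁻ x in ⋃ n : ℕ, Set.Ioc (R * 2 ^ n) (R * 2 ^ (n+1)), g x ∂F.measure :=
          lintegral_mono_set hsubR
      _ ≤ ∑' n : ℕ, ∫⁻ x in Set.Ioc (R * 2 ^ n) (R * 2 ^ (n+1)), g x ∂F.measure :=
          lintegral_iUnion_le _ _
      _ ≤ ∑' n : ℕ, T n := ENNReal.tsum_le_tsum htermR
      _ < ⊤ := hsum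
  have htailL : ∫⁻ x in Set.Iic (-R), g x ∂F.measure < ⊤ := by
    calc ∫⁻ x in Set.Iic (-R), g x ∂F.measure
        ≤ ∫⁻ x in ⋃ n : ℕ, Set.Ioc (-(R * 2 ^ (n+1))) (-(R * 2 ^ n)), g x ∂F.measure :=
          lintegral_mono_set hsubL
      _ ≤ ∑' n : ℕ, ∫⁻ x in Set.Ioc (-(R * 2 ^ (n+1))) (-(R * 2 ^ n)), g x ∂F.measure :=
          lintegral_iUnion_le _ _
      _ ≤ ∑' n : ℕ, T n := ENNReal.tsum_le_tsum htermL
      _ < ⊤ := hsum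
  have hmid : ∫⁻ x in Set.Ioc (-R) R, g x ∂F.measure < ⊤ := by
    calc ∫⁻ x in Set.Ioc (-R) R, g x ∂F.measure
        ≤ ∫⁻ _x in Set.Ioc (-R) R, (1 : ENNReal) ∂F.measure := by
          apply setLIntegral_mono measurable_const
          intro x _
          exact ENNReal.ofReal_le_one.mpr (min_le_left _ _)
      _ = F.measure (Set.Ioc (-R) R) := by rw [setLIntegral_const, one_mul]
      _ = ENNReal.ofReal (F R - F (-R)) := StieltjesFunction.measure_Ioc F _ _
      _ < ⊤ := ENNReal.ofReal_lt_top
  -- assemble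
  have hcover : (Set.univ : Set ℝ) ⊆ Set.Iic (-R) ∪ (Set.Ioc (-R) R ∪ Set.Ioi R) := by
    intro x _
    rcases le_or_gt x (-R) with h | h
    · exact Or.inl h
    · rcases le_or_gt x R with h' | h'
      · exact Or.inr (Or.inl ⟨h, h'⟩)
      · exact Or.inr (Or.inr h')
  calc ∫⁻ x : ℝ, ENNReal.ofReal (min 1 (|x| ^ (-p))) ∂F.measure
      = ∫⁻ x in Set.univ, g x ∂F.measure := (setLIntegral_univ _).symm
    _ ≤ ∫⁻ x in Set.Iic (-R) ∪ (Set.Ioc (-R) R ∪ Set.Ioi R), g x ∂F.measure :=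
        lintegral_mono_set hcover
    _ ≤ ∫⁻ x in Set.Iic (-R), g x ∂F.measure +
        ∫⁻ x in Set.Ioc (-R) R ∪ Set.Ioi R, g x ∂F.measure := lintegral_union_le _ _ _
    _ ≤ ∫⁻ x in Set.Iic (-R), g x ∂F.measure +
        (∫⁻ x in Set.Ioc (-R) R, g x ∂F.measure + ∫⁻ x in Set.Ioi R, g x ∂F.measure) :=
        add_le_add_right (lintegral_union_le _ _ _) _
    _ < ⊤ := by
        apply ENNReal.add_lt_top.mpr
        exact ⟨htailL, ENNReal.add_lt_top.mpr ⟨hmid, htailR⟩⟩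
end
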